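/- arXiv:1910.14008 — 6 statements merged into one kernel-verified Lean document; each statement's English description precedes it below -/
import Mathlib

section
/- For every committee-selection instance with monotone preferences (any number n ≥ 1 of voters and any finite set of candidates with arbitrary positive weights) and every weight limit K > 0, there exists a 32-approximately stable committee of weight at most K; that is, a committee S with w(S) ≤ K such that for every nonempty committee S', V(S,S') < 32·(w(S')/K)·n. -/
attribute [local instance] Classical.propDecidable

open Finset Matrix

/-!
Voters' preferences are replaced by utilities that are monotone under inclusion. By the minimax
theorem there is a lottery over committees of weight at most `L = 7K/20` against which every
light committee `T` (of weight at most `2K/63`) is preferred, on average, by at most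
`(295/132) (w(T)/L) n` voters. The best response to a distribution `λ` on light committees,
with `λ`-mean weight `μ`, is the union of `k = ⌊3L/(5μ)⌋` independent draws from `λ`: each voter
ranks it below a `λ`-random `T` with probability at most `1/(k+1)`, and by Cantelli's inequality
its weight stays below `L` with probability at least `44/59`.

Two independent draws `R₁, R₂` from the lottery leave on average at most `(3/10)² n` voters who
rank `R₁ ∪ R₂` within the bottom `3/10` of the lottery; every other voter preferring `T` to
`R₁ ∪ R₂` prefers `T` to `3/10` of the lottery. Recursing on the former voters with budget `3K/10`
and adding the resulting committee gives `2 V(S, T) K ≤ 63 w(T) n`.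
-/

theorem exists_nat_rank_iff {α : Type*} [Fintype α] (r : α → α → Prop)
    (htotal : ∀ a b, r a b ∨ r b a) (htrans : ∀ a b c, r a b → r b c → r a c) :
    ∃ f : α → ℕ, ∀ a b, r a b ↔ f b ≤ f a := by
  refine ⟨fun a => #{c | r a c}, fun a b => ⟨fun hab => ?_, fun hle => ?_⟩⟩
  · exact card_le_card fun c hc => by
      simp only [mem_filter, mem_univ, true_and] at hc ⊢
      exact htrans a b c hab hc
  · by_contra hab
    have hba := (htotal a b).resolve_left hab
    refine hle.not_gt (card_lt_card ⟨fun c hc => ?_, fun hsub => hab ?_⟩)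
    · simp only [mem_filter, mem_univ, true_and] at hc ⊢
      exact htrans b a c hba hc
    · have hbb : b ∈ ({c | r b c} : Finset α) := by simpa using (htotal b b).elim id id
      simpa using hsub hbb

theorem pow_succ_add_mul_pow_le {b c : ℝ} (hb : 0 ≤ b) (hc : 0 ≤ c) (k : ℕ) :
    b ^ (k + 1) + (k + 1) * c * b ^ k ≤ (b + c) ^ (k + 1) := by
  induction k with
  | zero => simp
  | succ k ih =>
    push_cast
    have hbk : 0 ≤ c * c * b ^ k := by positivity
    calc b ^ (k + 2) + (k + 1 + 1) * c * b ^ (k + 1)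
        ≤ (b + c) * (b ^ (k + 1) + (k + 1) * c * b ^ k) := by
          rw [pow_succ, pow_succ]; nlinarith [hbk]
      _ ≤ (b + c) * (b + c) ^ (k + 1) := by gcongr
      _ = (b + c) ^ (k + 1 + 1) := by ring

theorem add_one_mul_sum_mul_pow_sum_lt_le {ι β : Type*} [LinearOrder β] (f : ι → β)
    (p : ι → ℝ) (k : ℕ) (G : Finset ι) (hp : ∀ i ∈ G, 0 ≤ p i) :
    (k + 1) * ∑ i ∈ G, p i * (∑ j ∈ G with f j < f i, p j) ^ k
      ≤ (∑ i ∈ G, p i) ^ (k + 1) := by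
  induction G using Finset.induction_on_max_value f with
  | empty => simp
  | insert a G haG hmax ih =>
    have hpG : ∀ i ∈ G, 0 ≤ p i := fun i hi => hp i (mem_insert_of_mem hi)
    have hpa : 0 ≤ p a := hp a (mem_insert_self a G)
    have hbelow : ∑ i ∈ G, p i * (∑ j ∈ insert a G with f j < f i, p j) ^ k
        = ∑ i ∈ G, p i * (∑ j ∈ G with f j < f i, p j) ^ k :=
      sum_congr rfl fun i hi => by rw [filter_insert, if_neg (not_lt.2 (hmax i hi))]
    have hbelow_a : ∑ j ∈ insert a G with f j < f a, p j ≤ ∑ j ∈ G, p j := by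
      rw [filter_insert, if_neg (lt_irrefl _)]
      exact sum_le_sum_of_subset_of_nonneg (filter_subset _ _) fun i hi _ => hpG i hi
    have hG0 : 0 ≤ ∑ j ∈ G, p j := sum_nonneg hpG
    rw [sum_insert haG, sum_insert haG, add_comm (p a), hbelow]
    calc (k + 1) * (p a * (∑ j ∈ insert a G with f j < f a, p j) ^ k
          + ∑ i ∈ G, p i * (∑ j ∈ G with f j < f i, p j) ^ k)
        ≤ (k + 1) * p a * (∑ j ∈ G, p j) ^ k + (∑ j ∈ G, p j) ^ (k + 1) := by
          have hpow := pow_le_pow_left₀ (sum_nonneg fun j hj => hp j (mem_filter.1 hj).1)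
            hbelow_a k
          nlinarith [ih hpG, mul_le_mul_of_nonneg_left hpow
            (mul_nonneg (by positivity : (0 : ℝ) ≤ k + 1) hpa)]
      _ ≤ (∑ j ∈ G, p j + p a) ^ (k + 1) := by
          linarith [pow_succ_add_mul_pow_le hG0 hpa k]

section LowerMass

variable {ι β : Type*} [Fintype ι] [LinearOrder β]

noncomputable def lowerMass (f : ι → β) (x : ι → ℝ) (b : β) : ℝ := ∑ i with f i ≤ b, x i

theorem lowerMass_mono (f : ι → β) {x : ι → ℝ} (hx : ∀ i, 0 ≤ x i) {b b' : β} (h : b ≤ b') :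
    lowerMass f x b ≤ lowerMass f x b' :=
  sum_le_sum_of_subset_of_nonneg
    (fun i hi => by simp only [mem_filter] at hi ⊢; exact ⟨hi.1, hi.2.trans h⟩) fun i _ _ => hx i

theorem sum_lowerMass_lt_le (f : ι → β) {x : ι → ℝ} (hx : ∀ i, 0 ≤ x i) {q : ℝ} (hq : 0 ≤ q) :
    ∑ i with lowerMass f x (f i) < q, x i ≤ q := by
  set A : Finset ι := {i | lowerMass f x (f i) < q}
  rcases A.eq_empty_or_nonempty with hA | hA
  · simpa [hA] using hq
  obtain ⟨m, hmA, hmax⟩ := A.exists_max_image f hA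
  calc ∑ i ∈ A, x i ≤ lowerMass f x (f m) :=
        sum_le_sum_of_subset_of_nonneg (fun i hi => by simpa using hmax i hi) fun i _ _ => hx i
    _ ≤ q := (mem_filter.1 hmA).2.le

end LowerMass

section IidExpect

variable {κ : Type*} [Fintype κ] (p : κ → ℝ)

noncomputable def iidExpect (k : ℕ) (F : (Fin k → κ) → ℝ) : ℝ :=
  ∑ t, (∏ i, p (t i)) * F t

theorem iidExpect_succ (k : ℕ) (F : (Fin (k + 1) → κ) → ℝ) :
    iidExpect p (k + 1) F = ∑ a, p a * iidExpect p k (fun t => F (Fin.cons a t)) := by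
  unfold iidExpect
  rw [← (Fin.consEquiv fun _ => κ).sum_comp, Fintype.sum_prod_type]
  refine sum_congr rfl fun a _ => ?_
  rw [mul_sum]
  refine sum_congr rfl fun t _ => ?_
  simp [Fin.consEquiv, Fin.prod_univ_succ, mul_assoc]

theorem iidExpect_prod (k : ℕ) (h : κ → ℝ) :
    iidExpect p k (fun t => ∏ i, h (t i)) = (∑ a, p a * h a) ^ k := by
  simp [iidExpect, Fintype.sum_pow, prod_mul_distrib]

theorem iidExpect_add (k : ℕ) (F G : (Fin k → κ) → ℝ) :
    iidExpect p k (fun t => F t + G t) = iidExpect p k F + iidExpect p k G := by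
  simp [iidExpect, mul_add, sum_add_distrib]

theorem iidExpect_const_mul (k : ℕ) (c : ℝ) (F : (Fin k → κ) → ℝ) :
    iidExpect p k (fun t => c * F t) = c * iidExpect p k F := by
  simp [iidExpect, mul_sum, mul_left_comm]

theorem iidExpect_finset_sum {ι : Type*} (k : ℕ) (I : Finset ι)
    (F : ι → (Fin k → κ) → ℝ) :
    iidExpect p k (fun t => ∑ j ∈ I, F j t) = ∑ j ∈ I, iidExpect p k (F j) := by
  simp only [iidExpect, mul_sum]
  exact sum_comm

variable {p}

theorem iidExpect_const (hp : ∑ a, p a = 1) (k : ℕ) (c : ℝ) :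
    iidExpect p k (fun _ => c) = c := by
  have h1 : iidExpect p k (fun _ => 1) = 1 := by
    simpa [hp] using iidExpect_prod p k (fun _ => 1)
  simpa [h1] using iidExpect_const_mul p k c (fun _ => 1)

theorem iidExpect_mono (hp : ∀ a, 0 ≤ p a) {k : ℕ} {F G : (Fin k → κ) → ℝ}
    (h : ∀ t, F t ≤ G t) : iidExpect p k F ≤ iidExpect p k G :=
  sum_le_sum fun t _ => mul_le_mul_of_nonneg_left (h t) (prod_nonneg fun _ _ => hp _)

theorem iidExpect_sum_coord (hp : ∑ a, p a = 1) (g : κ → ℝ) (k : ℕ) :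
    iidExpect p k (fun t => ∑ i, g (t i)) = k * ∑ a, p a * g a := by
  induction k with
  | zero => simpa using iidExpect_const hp 0 0
  | succ k ih =>
    simp only [iidExpect_succ, Fin.sum_univ_succ, Fin.cons_zero, Fin.cons_succ, iidExpect_add,
      iidExpect_const hp, ih, mul_add, sum_add_distrib, ← sum_mul, hp]
    push_cast
    ring

theorem iidExpect_sq_sum_coord_sub (hp : ∑ a, p a = 1) (g : κ → ℝ) (k : ℕ) :
    iidExpect p k (fun t => (∑ i, g (t i) - k * ∑ a, p a * g a) ^ 2)
      = k * (∑ a, p a * g a ^ 2 - (∑ a, p a * g a) ^ 2) := by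
  set μ := ∑ a, p a * g a with hμ
  induction k with
  | zero => simpa using iidExpect_const hp 0 0
  | succ k ih =>
    have hsplit : ∀ a (t : Fin k → κ), (∑ i, g (Fin.cons a t i) - (k + 1 : ℕ) * μ) ^ 2
        = (g a - μ) ^ 2 + (2 * (g a - μ) * (∑ i, g (t i)) + (-2 * (g a - μ) * (k * μ)))
          + (∑ i, g (t i) - k * μ) ^ 2 := by
      intro a t
      simp only [Fin.sum_univ_succ, Fin.cons_zero, Fin.cons_succ]
      push_cast
      ring
    have hstep : ∀ a, iidExpect p k (fun t => (∑ i, g (Fin.cons a t i) - (k + 1 : ℕ) * μ) ^ 2)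
        = (g a - μ) ^ 2 + k * (∑ a, p a * g a ^ 2 - μ ^ 2) := fun a => by
      simp only [hsplit, iidExpect_add, iidExpect_const hp, iidExpect_const_mul,
        iidExpect_sum_coord hp, ih, ← hμ]
      ring
    rw [iidExpect_succ]
    simp only [hstep]
    have hterm : ∀ a, p a * ((g a - μ) ^ 2 + k * (∑ a, p a * g a ^ 2 - μ ^ 2))
        = p a * g a ^ 2 + -2 * μ * (p a * g a)
          + (μ ^ 2 + k * (∑ a, p a * g a ^ 2 - μ ^ 2)) * p a := fun a => by ring
    simp only [hterm, sum_add_distrib, ← mul_sum, hp, ← hμ]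
    push_cast
    ring

end IidExpect

theorem cantelli {ι : Type*} [Fintype ι] {P X : ι → ℝ} (hP : ∀ i, 0 ≤ P i)
    (hP1 : ∑ i, P i = 1) {m V τ : ℝ} (hm : ∑ i, P i * X i = m)
    (hV : ∑ i, P i * (X i - m) ^ 2 = V) (hτ : 0 < τ) :
    (∑ i with m + τ ≤ X i, P i) * (V + τ ^ 2) ≤ V := by
  have hV0 : 0 ≤ V := hV ▸ sum_nonneg fun i _ => mul_nonneg (hP i) (sq_nonneg _)
  -- Markov's inequality for `(X - m + u)²`, with the optimal shift `u = V / τ`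
  set u := V / τ with hu_def
  have hu : 0 ≤ u := div_nonneg hV0 hτ.le
  have hshift : ∑ i, P i * (X i - m + u) ^ 2 = V + u ^ 2 := by
    have : ∀ i, P i * (X i - m + u) ^ 2
        = P i * (X i - m) ^ 2 + 2 * u * (P i * X i) + (u ^ 2 - 2 * u * m) * P i :=
      fun i => by ring
    simp only [this, sum_add_distrib, ← mul_sum, hV, hm, hP1]
    ring
  have hmarkov : (∑ i with m + τ ≤ X i, P i) * (τ + u) ^ 2 ≤ V + u ^ 2 := by
    rw [sum_mul, ← hshift]
    calc ∑ i with m + τ ≤ X i, P i * (τ + u) ^ 2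
        ≤ ∑ i with m + τ ≤ X i, P i * (X i - m + u) ^ 2 := by
          refine sum_le_sum fun i hi => mul_le_mul_of_nonneg_left ?_ (hP i)
          have := (mem_filter.1 hi).2
          exact pow_le_pow_left₀ (by positivity) (by linarith) 2
      _ ≤ ∑ i, P i * (X i - m + u) ^ 2 :=
          sum_le_sum_of_subset_of_nonneg (filter_subset _ _) fun i _ _ =>
            mul_nonneg (hP i) (sq_nonneg _)
  have hτu : τ + u = (V + τ ^ 2) / τ := by rw [hu_def]; field_simp; ring
  have hVu : V + u ^ 2 = V * (V + τ ^ 2) / τ ^ 2 := by rw [hu_def]; field_simp; ring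
  rw [hτu, hVu, div_pow, mul_div_assoc', div_le_div_iff_of_pos_right (by positivity)] at hmarkov
  have hpos : 0 < V + τ ^ 2 := by positivity
  nlinarith

theorem exists_mul_sum_le_sum_mul {ι : Type*} {D : Finset ι} (hD : D.Nonempty) {P : ι → ℝ}
    (hP : ∀ i ∈ D, 0 ≤ P i) (F : ι → ℝ) :
    ∃ i ∈ D, F i * ∑ j ∈ D, P j ≤ ∑ j ∈ D, P j * F j := by
  obtain ⟨i, hi, hmin⟩ := D.exists_min_image F hD
  refine ⟨i, hi, ?_⟩
  rw [mul_sum]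
  exact sum_le_sum fun j hj => by
    rw [mul_comm]
    exact mul_le_mul_of_nonneg_left (hmin j hj) (hP j hj)

theorem exists_mem_stdSimplex_vecMul_nonpos {ι κ : Type*} [Fintype ι] [Fintype κ] [Nonempty ι]
    (A : Matrix ι κ ℝ) (h : ∀ y ∈ stdSimplex ℝ κ, ∃ i, (A *ᵥ y) i ≤ 0) :
    ∃ x ∈ stdSimplex ℝ ι, ∀ j, (x ᵥ* A) j ≤ 0 := by
  obtain ⟨i₀⟩ := ‹Nonempty ι›
  cases isEmpty_or_nonempty κ with
  | inl _ => exact ⟨_, single_mem_stdSimplex ℝ i₀, isEmptyElim⟩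
  | inr _ =>
  obtain ⟨a, ha, b, hb, hsaddle⟩ :=
    Sion.exists_isSaddlePointOn (f := fun x y => x ⬝ᵥ (A *ᵥ y))
      ⟨_, single_mem_stdSimplex ℝ i₀⟩ (convex_stdSimplex ℝ ι) (isCompact_stdSimplex ℝ ι)
      (fun y _ => (Continuous.lowerSemicontinuous (by fun_prop)).lowerSemicontinuousOn _)
      (fun y _ => by
        simp_rw [dotProduct_comm _ (A *ᵥ y)]
        exact (LinearMap.convexOn (dotProductBilin ℝ ℝ (A *ᵥ y))
          (convex_stdSimplex ℝ ι)).quasiconvexOn)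
      (convex_stdSimplex ℝ κ) ⟨_, single_mem_stdSimplex ℝ (Classical.arbitrary κ)⟩
      (isCompact_stdSimplex ℝ κ)
      (fun x _ => (Continuous.upperSemicontinuous (by fun_prop)).upperSemicontinuousOn _)
      (fun x _ => by
        simp_rw [dotProduct_mulVec]
        exact (LinearMap.concaveOn (dotProductBilin ℝ ℝ (x ᵥ* A))
          (convex_stdSimplex ℝ κ)).quasiconcaveOn)
  obtain ⟨i, hi⟩ := h b hb
  refine ⟨a, ha, fun j => ?_⟩
  have key : a ⬝ᵥ (A *ᵥ Pi.single j 1) ≤ 0 :=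
    (hsaddle _ (single_mem_stdSimplex ℝ i) _ (single_mem_stdSimplex ℝ j)).trans
      (by simpa only [single_dotProduct, one_mul] using hi)
  rwa [dotProduct_mulVec, dotProduct_single, mul_one] at key

section Committees

variable {C N β : Type*} [LinearOrder β]

noncomputable def weight (s : C → ℝ) (S : Finset C) : ℝ := ∑ i ∈ S, s i

noncomputable def deviators (u : N → Finset C → β) (W : Finset N) (S T : Finset C) :
    Finset N :=
  {v ∈ W | u v S < u v T}

variable {s : C → ℝ}

theorem weight_nonneg (hs : ∀ i, 0 ≤ s i) (S : Finset C) : 0 ≤ weight s S :=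
  sum_nonneg fun i _ => hs i

theorem weight_pos (hs : ∀ i, 0 < s i) {S : Finset C} (hS : S.Nonempty) : 0 < weight s S :=
  sum_pos (fun i _ => hs i) hS

theorem weight_union_le (hs : ∀ i, 0 ≤ s i) (S T : Finset C) :
    weight s (S ∪ T) ≤ weight s S + weight s T := by
  have := sum_union_inter (s₁ := S) (s₂ := T) (f := s)
  have := weight_nonneg hs (S ∩ T)
  unfold weight at *
  linarith

theorem weight_biUnion_le {ι : Type*} (hs : ∀ i, 0 ≤ s i) (I : Finset ι) (c : ι → Finset C) :
    weight s (I.biUnion c) ≤ ∑ i ∈ I, weight s (c i) := by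
  induction I using Finset.induction_on with
  | empty => simp [weight]
  | insert a I haI ih =>
    rw [biUnion_insert, sum_insert haI]
    linarith [weight_union_le hs (c a) (I.biUnion c)]

theorem card_deviators_eq_sum (u : N → Finset C → β) (W : Finset N) (S T : Finset C) :
    (#(deviators u W S T) : ℝ) = ∑ v ∈ W, if u v S < u v T then 1 else 0 := by
  rw [deviators, natCast_card_filter]

end Committees

section BestResponse

variable {C N β κ : Type*} [LinearOrder β] [Fintype κ]

theorem iidExpect_union_lt_le_pow {p : κ → ℝ} (hp : ∀ a, 0 ≤ p a) {f : Finset C → β}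
    (hf : Monotone f) (c : κ → Finset C) (k : ℕ) (b : β) :
    iidExpect p k (fun t => if f (univ.biUnion (c ∘ t)) < b then 1 else 0)
      ≤ (∑ a with f (c a) < b, p a) ^ k := by
  have hind : ∀ t : Fin k → κ, (if f (univ.biUnion (c ∘ t)) < b then (1 : ℝ) else 0)
      ≤ ∏ i, if f (c (t i)) < b then 1 else 0 := fun t => by
    split_ifs with hlt
    · refine (prod_eq_one fun i _ => if_pos ?_).ge
      exact (hf (subset_biUnion_of_mem (c ∘ t) (mem_univ i))).trans_lt hlt
    · exact prod_nonneg fun i _ => by split_ifs <;> norm_num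
  refine (iidExpect_mono hp hind).trans_eq ?_
  rw [iidExpect_prod p k (fun a => if f (c a) < b then 1 else 0), sum_filter]
  simp

theorem add_one_mul_iidExpect_card_deviators_le (u : N → Finset C → β)
    (hu : ∀ v, Monotone (u v)) {p : κ → ℝ} (hp : p ∈ stdSimplex ℝ κ) (c : κ → Finset C)
    (k : ℕ) (W : Finset N) :
    (k + 1) * iidExpect p k
        (fun t => ∑ j, p j * #(deviators u W (univ.biUnion (c ∘ t)) (c j))) ≤ #W := by
  simp only [card_deviators_eq_sum, mul_sum, iidExpect_finset_sum, iidExpect_const_mul]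
  rw [sum_comm, card_eq_sum_ones, Nat.cast_sum]
  refine sum_le_sum fun v _ => ?_
  rw [← mul_sum]
  calc (k + 1) * ∑ j, p j * iidExpect p k
          (fun t => if u v (univ.biUnion (c ∘ t)) < u v (c j) then 1 else 0)
      ≤ (k + 1) * ∑ j, p j * (∑ a with u v (c a) < u v (c j), p a) ^ k := by
        gcongr with j
        · exact hp.1 j
        · exact iidExpect_union_lt_le_pow hp.1 (hu v) c k _
    _ ≤ (∑ j, p j) ^ (k + 1) :=
        add_one_mul_sum_mul_pow_sum_lt_le (u v ∘ c) p k univ fun j _ => hp.1 j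
    _ = (1 : ℕ) := by rw [hp.2]; simp

theorem sum_prod_filter_le_sum_le {p : κ → ℝ} (hp : p ∈ stdSimplex ℝ κ) {w : κ → ℝ}
    (hw : ∀ a, 0 ≤ w a) {L : ℝ} (hL : 0 < L) (hwL : ∀ a, 11 * w a ≤ L) {k : ℕ}
    (hk : k * ∑ a, p a * w a ≤ 3 / 5 * L) :
    ∑ t : Fin k → κ with L ≤ ∑ i, w (t i), ∏ i, p (t i) ≤ 15 / 59 := by
  set μ := ∑ a, p a * w a
  set ν := ∑ a, p a * w a ^ 2
  set V := k * (ν - μ ^ 2)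
  have hμ : 0 ≤ μ := sum_nonneg fun a _ => mul_nonneg (hp.1 a) (hw a)
  have hν : ν ≤ L / 11 * μ := by
    rw [mul_sum]
    exact sum_le_sum fun a _ => by nlinarith [mul_nonneg (hp.1 a) (hw a), hwL a]
  have hV : V ≤ 3 / 55 * L ^ 2 := by
    have : (k : ℝ) * ν ≤ L / 11 * (k * μ) := by
      nlinarith [mul_le_mul_of_nonneg_left hν (Nat.cast_nonneg k : (0 : ℝ) ≤ k)]
    nlinarith [mul_nonneg (Nat.cast_nonneg k : (0 : ℝ) ≤ k) (sq_nonneg μ)]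
  have hP : ∀ t : Fin k → κ, 0 ≤ ∏ i, p (t i) := fun t => prod_nonneg fun i _ => hp.1 _
  have hP1 : ∑ t : Fin k → κ, ∏ i, p (t i) = 1 := by
    simpa [iidExpect] using iidExpect_const hp.2 k 1
  have hcantelli := cantelli (m := k * μ) (V := V) (τ := L - k * μ) hP hP1
    (iidExpect_sum_coord hp.2 w k) (iidExpect_sq_sum_coord_sub hp.2 w k) (by linarith)
  simp only [add_sub_cancel] at hcantelli
  set π := ∑ t : Fin k → κ with L ≤ ∑ i, w (t i), ∏ i, p (t i)
  have hπ1 : π ≤ 1 :=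
    hP1 ▸ sum_le_sum_of_subset_of_nonneg (filter_subset _ _) fun t _ _ => hP t
  have hπ0 : 0 ≤ π := sum_nonneg fun t _ => hP t
  have hτ : (2 / 5 * L) ^ 2 ≤ (L - k * μ) ^ 2 :=
    pow_le_pow_left₀ (by positivity) (by linarith) 2
  have key : π * (59 / 275 * L ^ 2) ≤ 15 / 59 * (59 / 275 * L ^ 2) := by
    nlinarith [mul_le_mul_of_nonneg_left hτ hπ0,
      mul_le_mul_of_nonneg_left hV (sub_nonneg.2 hπ1)]
  exact le_of_mul_le_mul_right key (by positivity)

theorem exists_best_response (u : N → Finset C → β) (hu : ∀ v, Monotone (u v)) {s : C → ℝ}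
    (hs : ∀ i, 0 < s i) (W : Finset N) {L : ℝ} (c : κ → Finset C) (hc : ∀ j, (c j).Nonempty)
    (hlight : ∀ j, 11 * weight s (c j) ≤ L) {p : κ → ℝ} (hp : p ∈ stdSimplex ℝ κ) :
    ∃ S, weight s S ≤ L ∧ 132 * (∑ j, p j * #(deviators u W S (c j))) * L
      ≤ 295 * (∑ j, p j * weight s (c j)) * #W := by
  obtain ⟨j₀, -, hj₀⟩ := exists_ne_zero_of_sum_ne_zero (hp.2.symm ▸ one_ne_zero)
  have hw : ∀ j, 0 < weight s (c j) := fun j => weight_pos hs (hc j)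
  set μ := ∑ j, p j * weight s (c j)
  have hμ : 0 < μ := sum_pos' (fun j _ => mul_nonneg (hp.1 j) (hw j).le)
    ⟨j₀, mem_univ _, mul_pos ((hp.1 j₀).lt_of_ne' hj₀) (hw j₀)⟩
  have hL : 0 < L := by linarith [hlight j₀, hw j₀]
  set k := ⌊3 / 5 * L / μ⌋₊
  have hk : k * μ ≤ 3 / 5 * L := (le_div_iff₀ hμ).1 (Nat.floor_le (by positivity))
  have hk' : 3 / 5 * L < (k + 1) * μ := (div_lt_iff₀ hμ).1 (Nat.lt_floor_add_one _)
  set P : (Fin k → κ) → ℝ := fun t => ∏ i, p (t i)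
  have hP : ∀ t, 0 ≤ P t := fun t => prod_nonneg fun i _ => hp.1 _
  set Φ : (Fin k → κ) → ℝ :=
    fun t => ∑ j, p j * #(deviators u W (univ.biUnion (c ∘ t)) (c j))
  have hΦ : ∀ t, 0 ≤ Φ t :=
    fun t => sum_nonneg fun j _ => mul_nonneg (hp.1 j) (Nat.cast_nonneg _)
  set good : Finset (Fin k → κ) := {t | ¬ L ≤ ∑ i, weight s (c (t i))}
  have hgood : 44 / 59 ≤ ∑ t ∈ good, P t := by
    have hbad := sum_prod_filter_le_sum_le hp (fun j => (hw j).le) hL hlight hk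
    have hP1 : ∑ t, P t = 1 := by simpa [iidExpect] using iidExpect_const hp.2 k 1
    rw [← sum_filter_add_sum_filter_not univ (fun t => L ≤ ∑ i, weight s (c (t i)))] at hP1
    linarith
  have hgood_ne : good.Nonempty := nonempty_of_sum_ne_zero (f := P) (by linarith)
  obtain ⟨t, ht, hΦt⟩ := exists_mul_sum_le_sum_mul hgood_ne (fun t _ => hP t) Φ
  refine ⟨univ.biUnion (c ∘ t), (weight_biUnion_le (fun i => (hs i).le) _ _).trans
    (not_le.1 (mem_filter.1 ht).2).le, ?_⟩
  have hE : ∑ t ∈ good, P t * Φ t ≤ iidExpect p k Φ :=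
    sum_le_sum_of_subset_of_nonneg (subset_univ _) fun t _ _ => mul_nonneg (hP t) (hΦ t)
  have hdev := add_one_mul_iidExpect_card_deviators_le u hu hp c k W
  change 132 * Φ t * L ≤ 295 * μ * #W
  nlinarith [mul_le_mul_of_nonneg_left hgood (hΦ t), mul_le_mul_of_nonneg_left hk'.le (hΦ t)]

end BestResponse

section Lottery

variable {C N β : Type*} [Fintype C] [LinearOrder β]

theorem exists_lottery (u : N → Finset C → β) (hu : ∀ v, Monotone (u v)) {s : C → ℝ}
    (hs : ∀ i, 0 < s i) (W : Finset N) {L : ℝ} (hL : 0 ≤ L) :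
    ∃ x ∈ stdSimplex ℝ {R : Finset C // weight s R ≤ L}, ∀ T : Finset C, T.Nonempty →
      11 * weight s T ≤ L →
        132 * (∑ R, x R * #(deviators u W R T)) * L ≤ 295 * weight s T * #W := by
  have : Nonempty {R : Finset C // weight s R ≤ L} := ⟨⟨∅, by simpa [weight] using hL⟩⟩
  let A : Matrix {R : Finset C // weight s R ≤ L}
      {T : Finset C // T.Nonempty ∧ 11 * weight s T ≤ L} ℝ :=
    fun R T => 132 * #(deviators u W R T) * L - 295 * weight s T * #W
  obtain ⟨x, hx, hxA⟩ := exists_mem_stdSimplex_vecMul_nonpos A fun y hy => by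
    obtain ⟨S, hS, hSy⟩ :=
      exists_best_response u hu hs W (fun T => T.1) (fun T => T.2.1) (fun T => T.2.2) hy
    refine ⟨⟨S, hS⟩, ?_⟩
    have : (A *ᵥ y) ⟨S, hS⟩ = 132 * (∑ T, y T * #(deviators u W S T)) * L
        - 295 * (∑ T, y T * weight s T) * #W := by
      simp only [mulVec, dotProduct, A, sub_mul, sum_sub_distrib, mul_sum, sum_mul]
      congr 1 <;> exact sum_congr rfl fun T _ => by ring
    linarith
  refine ⟨x, hx, fun T hT hTL => ?_⟩
  have := hxA ⟨T, hT, hTL⟩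
  simp only [vecMul, dotProduct, A, mul_sub, sum_sub_distrib, ← sum_mul, hx.2, one_mul,
    sub_nonpos] at this
  rw [mul_sum, sum_mul]
  convert this using 1
  exact sum_congr rfl fun R _ => by ring

end Lottery

section Rounding

variable {C N β ι : Type*} [LinearOrder β] [Fintype ι]

theorem exists_pair_card_lowerMass_union_lt_le (u : N → Finset C → β)
    (hu : ∀ v, Monotone (u v)) (c : ι → Finset C) {x : ι → ℝ} (hx : x ∈ stdSimplex ℝ ι)
    (W : Finset N) {q : ℝ} (hq : 0 ≤ q) :
    ∃ i j, (#{v ∈ W | lowerMass (u v ∘ c) x (u v (c i ∪ c j)) < q} : ℝ) ≤ q ^ 2 * #W := by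
  set low : N → ι → ℝ := fun v i => if lowerMass (u v ∘ c) x (u v (c i)) < q then 1 else 0
  have hlow : ∀ v, ∑ i, x i * low v i ≤ q := fun v => by
    simpa [low, mul_ite, sum_ite] using sum_lowerMass_lt_le (u v ∘ c) hx.1 hq
  -- a voter for whom `c i ∪ c j` is in the bottom `q` also ranks `c i` and `c j` there
  have hunion : ∀ v i j, (if lowerMass (u v ∘ c) x (u v (c i ∪ c j)) < q then (1 : ℝ) else 0)
      ≤ low v i * low v j := fun v i j => by
    split_ifs with h
    · have hi := lowerMass_mono (u v ∘ c) hx.1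
        (hu v (subset_union_left (s₁ := c i) (s₂ := c j)))
      have hj := lowerMass_mono (u v ∘ c) hx.1
        (hu v (subset_union_right (s₁ := c i) (s₂ := c j)))
      simp [low, hi.trans_lt h, hj.trans_lt h]
    · exact mul_nonneg (by positivity) (by positivity)
  have hlow0 : ∀ v i, 0 ≤ x i * low v i := fun v i => mul_nonneg (hx.1 i) (by positivity)
  set bad : ι × ι → Finset N := fun p => {v ∈ W | lowerMass (u v ∘ c) x (u v (c p.1 ∪ c p.2)) < q}
  have hmean : ∑ p : ι × ι, x p.1 * x p.2 * #(bad p) ≤ q ^ 2 * #W := by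
    calc ∑ p : ι × ι, x p.1 * x p.2 * #(bad p)
        = ∑ v ∈ W, ∑ i, ∑ j, x i * x j
            * if lowerMass (u v ∘ c) x (u v (c i ∪ c j)) < q then (1 : ℝ) else 0 := by
          simp only [bad, natCast_card_filter, mul_sum, Fintype.sum_prod_type]
          exact (sum_congr rfl fun i _ => sum_comm).trans sum_comm
      _ ≤ ∑ v ∈ W, ∑ i, ∑ j, (x i * low v i) * (x j * low v j) := by
          refine sum_le_sum fun v _ => sum_le_sum fun i _ => sum_le_sum fun j _ => ?_
          rw [mul_mul_mul_comm]
          exact mul_le_mul_of_nonneg_left (hunion v i j) (mul_nonneg (hx.1 i) (hx.1 j))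
      _ ≤ ∑ v ∈ W, q ^ 2 := by
          gcongr with v _
          rw [← sum_mul_sum, sq]
          exact mul_le_mul (hlow v) (hlow v) (sum_nonneg fun i _ => hlow0 v i) hq
      _ = q ^ 2 * #W := by rw [sum_const, nsmul_eq_mul, mul_comm]
  have hP1 : ∑ p : ι × ι, x p.1 * x p.2 = 1 := by
    rw [Fintype.sum_prod_type, ← sum_mul_sum, hx.2, mul_one]
  obtain ⟨i₀, -, -⟩ := exists_ne_zero_of_sum_ne_zero (hx.2.symm ▸ one_ne_zero)
  have : Nonempty ι := ⟨i₀⟩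
  obtain ⟨⟨i, j⟩, -, hij⟩ := exists_mul_sum_le_sum_mul (univ_nonempty (α := ι × ι))
    (P := fun p : ι × ι => x p.1 * x p.2) (fun p _ => mul_nonneg (hx.1 _) (hx.1 _))
    (fun p => (#(bad p) : ℝ))
  exact ⟨i, j, by simpa [hP1] using hij.trans hmean⟩

theorem mul_card_le_sum_mul_card_deviators (u : N → Finset C → β) (c : ι → Finset C)
    {x : ι → ℝ} (hx : ∀ i, 0 ≤ x i) (W : Finset N) (q : ℝ) (R T : Finset C) :
    q * #{v ∈ W | q ≤ lowerMass (u v ∘ c) x (u v R) ∧ u v R < u v T}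
      ≤ ∑ i, x i * #(deviators u W (c i) T) := by
  simp only [card_deviators_eq_sum, mul_sum]
  rw [sum_comm, card_filter, Nat.cast_sum, mul_sum]
  refine sum_le_sum fun v _ => ?_
  split_ifs with hv
  · calc q * ((1 : ℕ) : ℝ) ≤ lowerMass (u v ∘ c) x (u v R) := by simpa using hv.1
      _ ≤ ∑ i, x i * if u v (c i) < u v T then 1 else 0 := by
        simp only [lowerMass, mul_ite, mul_one, mul_zero, ← sum_filter]
        exact sum_le_sum_of_subset_of_nonneg
          (fun i hi => by
            simp only [mem_filter, Function.comp] at hi ⊢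
            exact ⟨hi.1, hi.2.trans_lt hv.2⟩)
          fun i _ _ => hx i
  · simpa using sum_nonneg fun i _ => by split_ifs <;> simp [hx i]

theorem deviators_union_subset (u : N → Finset C → β) (hu : ∀ v, Monotone (u v))
    (W : Finset N) (P : N → Prop) (R S T : Finset C) :
    deviators u W (R ∪ S) T ⊆ {v ∈ W | P v ∧ u v R < u v T} ∪ deviators u {v ∈ W | ¬ P v} S T := by
  intro v hv
  simp only [deviators, mem_filter, mem_union] at hv ⊢
  by_cases h : P v
  · exact Or.inl ⟨hv.1, h, (hu v subset_union_left).trans_lt hv.2⟩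
  · exact Or.inr ⟨⟨hv.1, h⟩, (hu v subset_union_right).trans_lt hv.2⟩

end Rounding

theorem exists_committee_card_deviators_le {C N β : Type*} [Fintype C] [LinearOrder β]
    (u : N → Finset C → β) (hu : ∀ v, Monotone (u v)) {s : C → ℝ} (hs : ∀ i, 0 < s i)
    (W : Finset N) {K : ℝ} (hK : 0 < K) :
    ∃ S, weight s S ≤ K ∧ ∀ T : Finset C, T.Nonempty →
      2 * #(deviators u W S T) * K ≤ 63 * weight s T * #W := by
  induction W using Finset.strongInduction generalizing K with
  | H W ih =>
  rcases W.eq_empty_or_nonempty with rfl | hW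
  · exact ⟨∅, by simpa [weight] using hK.le, fun T _ => by simp [deviators]⟩
  have hw := weight_nonneg (fun i => (hs i).le)
  obtain ⟨x, hx, hlot⟩ := exists_lottery u hu hs W (L := 7 / 20 * K) (by positivity)
  obtain ⟨R₁, R₂, hbad⟩ :=
    exists_pair_card_lowerMass_union_lt_le u hu Subtype.val hx W (q := 3 / 10) (by norm_num)
  set R := R₁.1 ∪ R₂.1
  set bad := {v ∈ W | ¬ 3 / 10 ≤ lowerMass (u v ∘ Subtype.val) x (u v R)}
  replace hbad : (#bad : ℝ) ≤ (3 / 10) ^ 2 * #W := by simpa only [bad, not_le] using hbad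
  have hbadW : bad ⊂ W := (filter_subset _ _).ssubset_of_ne fun h => by
    have : (0 : ℝ) < #W := by exact_mod_cast hW.card_pos
    rw [show bad = W from h] at hbad
    linarith
  obtain ⟨S', hS'K, hS'⟩ := ih bad hbadW (K := 3 / 10 * K) (by positivity)
  refine ⟨R ∪ S', ?_, fun T hT => ?_⟩
  · linarith [weight_union_le (fun i => (hs i).le) R S',
      weight_union_le (fun i => (hs i).le) R₁.1 R₂.1, R₁.2, R₂.2]
  by_cases hlight : 63 * weight s T ≤ 2 * K
  · have hcard : (#(deviators u W (R ∪ S') T) : ℝ)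
        ≤ #{v ∈ W | 3 / 10 ≤ lowerMass (u v ∘ Subtype.val) x (u v R) ∧ u v R < u v T}
          + #(deviators u bad S' T) := by
      exact_mod_cast (card_le_card (deviators_union_subset u hu W _ R S' T)).trans
        (card_union_le _ _)
    have hgood := mul_card_le_sum_mul_card_deviators u Subtype.val hx.1 W (3 / 10) R T
    -- `2 (10/3) (20/7) (295/132) + (10/3) 63 (3/10)² ≤ 63`
    nlinarith [hlot T hT (by linarith), hS' T hT, hw T]
  · have : (#(deviators u W (R ∪ S') T) : ℝ) ≤ #W := Nat.cast_le.2 (card_filter_le _ _)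
    nlinarith [hw T]

theorem stmt_0_general
    {C N : Type} [Fintype C] [Fintype N]
    (pref : N → Finset C → Finset C → Prop)
    (htotal : ∀ v S S', pref v S S' ∨ pref v S' S)
    (htrans : ∀ v S₁ S₂ S₃, pref v S₁ S₂ → pref v S₂ S₃ → pref v S₁ S₃)
    (hmono : ∀ v (S S' : Finset C), S ⊆ S' → pref v S' S)
    (hn : 1 ≤ Fintype.card N)
    (s : C → ℝ) (hs : ∀ i, 0 < s i)
    (K : ℝ) (hK : 0 < K) :
    ∃ S : Finset C, (∑ i ∈ S, s i) ≤ K ∧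
      ∀ S' : Finset C, S'.Nonempty →
        ((Finset.univ.filter (fun v : N => pref v S' S ∧ ¬ pref v S S')).card : ℝ)
          < 32 * ((∑ i ∈ S', s i) / K) * (Fintype.card N : ℝ) := by
  choose u hu using fun v => exists_nat_rank_iff (pref v) (htotal v) (htrans v)
  obtain ⟨S, hSK, hS⟩ := exists_committee_card_deviators_le u
    (fun v S S' h => (hu v S' S).1 (hmono v S S' h)) hs univ hK
  refine ⟨S, hSK, fun S' hS' => ?_⟩
  have hdev : univ.filter (fun v => pref v S' S ∧ ¬ pref v S S') = deviators u univ S S' := by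
    ext v
    simp only [deviators, mem_filter, mem_univ, true_and, hu, lt_iff_le_not_ge]
  have hn' : (1 : ℝ) ≤ Fintype.card N := by exact_mod_cast hn
  have hw := weight_pos hs hS'
  have hdevS' := hS S' hS'
  rw [card_univ] at hdevS'
  rw [hdev, show 32 * ((∑ i ∈ S', s i) / K) * (Fintype.card N : ℝ)
    = 32 * (∑ i ∈ S', s i) * Fintype.card N / K by ring, lt_div_iff₀ hK]
  unfold weight at hw hdevS'
  nlinarith

/-- For every committee-selection instance with monotone preferences
(`pref v S S'` means voter `v` weakly prefers committee `S` to committee `S'`)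
and every weight limit `K > 0`, there exists a `32`-approximately stable committee
of weight at most `K`. -/
theorem stmt_0
    {C N : Type} [Fintype C] [Fintype N] [DecidableEq C]
    (pref : N → Finset C → Finset C → Prop)
    (htotal : ∀ v S S', pref v S S' ∨ pref v S' S)
    (htrans : ∀ v S₁ S₂ S₃, pref v S₁ S₂ → pref v S₂ S₃ → pref v S₁ S₃)
    (hmono : ∀ v (S S' : Finset C), S ⊆ S' → pref v S' S)
    (hn : 1 ≤ Fintype.card N)
    (s : C → ℝ) (hs : ∀ i, 0 < s i)
    (K : ℝ) (hK : 0 < K) :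
    ∃ S : Finset C, (∑ i ∈ S, s i) ≤ K ∧
      ∀ S' : Finset C, S'.Nonempty →
        ((Finset.univ.filter (fun v : N => pref v S' S ∧ ¬ pref v S S')).card : ℝ)
          < 32 * ((∑ i ∈ S', s i) / K) * (Fintype.card N : ℝ) :=
  stmt_0_general pref htotal htrans hmono hn s hs K hK
end

section
/- Let 0 < K' ≤ K and let Δ_a be a finitely supported probability distribution over committees all of weight exactly K'. Then there exists a finitely supported probability distribution Δ_d over committees of weight at most K such that E_{S_d∼Δ_d, S_a∼Δ_a}[V(S_d, S_a)] < (K'/K)·n, where S_d and S_a are drawn independently. (In particular, Δ_d can be taken as the union of t = ⌊K/K'⌋ independent draws from Δ_a.) -/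
/-!
Let the defender draw `t = ⌊K / K'⌋` committees independently from `Δa` and take their union,
which has weight at most `t K' ≤ K`. For a fixed voter, an attacker committee that beats the
union beats each of the `t` draws. Together with the attacker's own draw these are `t + 1`
exchangeable draws, and at most one of them can be strictly preferred to all the others, so
this happens with probability at most `1 / (t + 1) < K' / K`. Summing over voters gives the
bound.
-/

attribute [local instance] Classical.propDecidable

open Finset

section SumNonneg

variable {α ι M : Type*} [DecidableEq α] [AddCommMonoid M] [PartialOrder M]
  [IsOrderedAddMonoid M] {g : α → M}

lemma sum_union_le_add (hg : ∀ a, 0 ≤ g a) (A B : Finset α) :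
    ∑ a ∈ A ∪ B, g a ≤ ∑ a ∈ A, g a + ∑ a ∈ B, g a := by
  rw [← sum_union_inter]
  exact le_add_of_nonneg_right (sum_nonneg fun a _ => hg a)

lemma sum_biUnion_le_sum_sum (hg : ∀ a, 0 ≤ g a) (s : Finset ι) (f : ι → Finset α) :
    ∑ a ∈ s.biUnion f, g a ≤ ∑ i ∈ s, ∑ a ∈ f i, g a := by
  induction s using Finset.induction with
  | empty => simp
  | insert i s hi ih =>
    rw [biUnion_insert, sum_insert hi]
    exact (sum_union_le_add hg _ _).trans (by gcongr)

end SumNonneg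

section Pushforward

variable {α β : Type*} [Fintype β] [DecidableEq α]

def pushforward (φ : β → α) (w : β → ℝ) (a : α) : ℝ := ∑ b with φ b = a, w b

variable {φ : β → α} {w : β → ℝ}

lemma pushforward_nonneg (hw : ∀ b, 0 ≤ w b) (a : α) : 0 ≤ pushforward φ w a :=
  sum_nonneg fun b _ => hw b

lemma sum_pushforward_mul [Fintype α] (h : α → ℝ) :
    ∑ a, pushforward φ w a * h a = ∑ b, w b * h (φ b) := by
  simp_rw [pushforward, sum_mul]
  rw [← sum_fiberwise univ φ]
  refine sum_congr rfl fun a _ => sum_congr rfl fun b hb => ?_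
  rw [(mem_filter.1 hb).2]

lemma sum_pushforward [Fintype α] : ∑ a, pushforward φ w a = ∑ b, w b := by
  simpa using sum_pushforward_mul (φ := φ) (w := w) 1

lemma exists_of_pushforward_ne_zero {a : α} (h : pushforward φ w a ≠ 0) :
    ∃ b, φ b = a ∧ w b ≠ 0 := by
  obtain ⟨b, hb, hwb⟩ := exists_ne_zero_of_sum_ne_zero h
  exact ⟨b, (mem_filter.1 hb).2, hwb⟩

end Pushforward

section IidWeight

variable {α ι : Type*} [Fintype ι] (p : α → ℝ)

def iidWeight (g : ι → α) : ℝ := ∏ i, p (g i)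

variable {p}

lemma iidWeight_nonneg (hp : ∀ a, 0 ≤ p a) (g : ι → α) : 0 ≤ iidWeight p g :=
  prod_nonneg fun i _ => hp (g i)

lemma sum_iidWeight [Fintype α] [DecidableEq ι] :
    ∑ g : ι → α, iidWeight p g = (∑ a, p a) ^ Fintype.card ι := by
  rw [← card_univ, ← prod_const, Fintype.prod_sum]
  rfl

lemma iidWeight_comp_perm (g : ι → α) (σ : Equiv.Perm ι) :
    iidWeight p (g ∘ σ) = iidWeight p g :=
  Equiv.prod_comp σ fun i => p (g i)

lemma iidWeight_cons {t : ℕ} (a : α) (f : Fin t → α) :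
    iidWeight p (Fin.cons a f : Fin (t + 1) → α) = p a * iidWeight p f :=
  Fin.prod_univ_succ _

lemma iidWeight_ne_zero {g : ι → α} (h : iidWeight p g ≠ 0) (i : ι) : p (g i) ≠ 0 :=
  (prod_ne_zero_iff.1 h) i (mem_univ i)

end IidWeight

section BeatsAll

variable {α ι : Type*} (r : α → α → Prop)

def BeatsAll (g : ι → α) (j : ι) : Prop := ∀ k ≠ j, r (g j) (g k)

variable {r}

lemma beatsAll_comp_perm {g : ι → α} {j : ι} (σ : Equiv.Perm ι) :
    BeatsAll r (g ∘ σ) j ↔ BeatsAll r g (σ j) := by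
  refine ⟨fun h k hk => ?_, fun h k hk => h (σ k) (σ.injective.ne hk)⟩
  simpa using h (σ.symm k) (by rintro rfl; simp at hk)

lemma beatsAll_cons_zero {t : ℕ} {a : α} {f : Fin t → α} :
    BeatsAll r (Fin.cons a f : Fin (t + 1) → α) 0 ↔ ∀ i, r a (f i) := by
  simp [BeatsAll, Fin.forall_fin_succ, Fin.succ_ne_zero]

lemma card_beatsAll_le_one [Fintype ι] (hr : ∀ a b, r a b → ¬ r b a) (g : ι → α) :
    #{j | BeatsAll r g j} ≤ 1 := by
  refine card_le_one.2 fun j hj k hk => ?_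
  by_contra hjk
  exact hr _ _ ((mem_filter.1 hj).2 k (Ne.symm hjk)) ((mem_filter.1 hk).2 j hjk)

end BeatsAll

section Tournament

variable {α ι : Type*} [Fintype α] {p : α → ℝ} {r : α → α → Prop}

lemma sum_iidWeight_beatsAll_eq [Fintype ι] [DecidableEq ι] (j k : ι) :
    ∑ g : ι → α, iidWeight p g * (if BeatsAll r g j then 1 else 0) =
      ∑ g : ι → α, iidWeight p g * (if BeatsAll r g k then 1 else 0) := by
  let e := (Equiv.swap j k).arrowCongr (Equiv.refl α)
  have he (g : ι → α) : e g = g ∘ Equiv.swap j k := funext fun i => by simp [e]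
  rw [← e.sum_comp]
  simp only [he, iidWeight_comp_perm, beatsAll_comp_perm, Equiv.swap_apply_left]

lemma card_mul_sum_iidWeight_beatsAll_le [Fintype ι] [DecidableEq ι] (hp0 : ∀ a, 0 ≤ p a)
    (hp1 : ∑ a, p a = 1) (hr : ∀ a b, r a b → ¬ r b a) (j : ι) :
    Fintype.card ι * ∑ g : ι → α, iidWeight p g * (if BeatsAll r g j then 1 else 0) ≤ 1 :=
  calc Fintype.card ι * ∑ g : ι → α, iidWeight p g * (if BeatsAll r g j then 1 else 0)
      = ∑ k, ∑ g : ι → α, iidWeight p g * (if BeatsAll r g k then 1 else 0) := by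
        rw [sum_congr rfl fun k _ => sum_iidWeight_beatsAll_eq k j, sum_const, card_univ,
          nsmul_eq_mul]
    _ = ∑ g : ι → α, iidWeight p g * #{k | BeatsAll r g k} := by
        rw [sum_comm]
        simp_rw [← mul_sum, sum_boole]
    _ ≤ ∑ g : ι → α, iidWeight p g := by
        gcongr with g
        exact mul_le_of_le_one_right (iidWeight_nonneg hp0 g)
          (by exact_mod_cast card_beatsAll_le_one hr g)
    _ = 1 := by rw [sum_iidWeight, hp1, one_pow]

lemma sum_mul_sum_iidWeight_forall_le (hp0 : ∀ a, 0 ≤ p a) (hp1 : ∑ a, p a = 1)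
    (hr : ∀ a b, r a b → ¬ r b a) (t : ℕ) :
    ∑ a, p a * ∑ f : Fin t → α, iidWeight p f * (if ∀ i, r a (f i) then 1 else 0) ≤
      1 / (t + 1) := by
  have h := card_mul_sum_iidWeight_beatsAll_le hp0 hp1 hr (0 : Fin (t + 1))
  rw [← (Fin.consEquiv fun _ => α).sum_comp, Fintype.sum_prod_type] at h
  simp only [Fin.consEquiv, Equiv.coe_fn_mk, iidWeight_cons, beatsAll_cons_zero,
    Fintype.card_fin] at h
  rw [le_div_iff₀ (by positivity)]
  simpa [mul_sum, mul_assoc, mul_comm] using h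

end Tournament

section StrictPref

variable {β : Type*} {pref : β → β → Prop} {A B B' : β}

def StrictPref (pref : β → β → Prop) (A B : β) : Prop := pref A B ∧ ¬ pref B A

lemma StrictPref.not_strictPref (h : StrictPref pref A B) : ¬ StrictPref pref B A :=
  fun h' => h.2 h'.1

lemma StrictPref.trans_pref (htrans : ∀ a b c, pref a b → pref b c → pref a c)
    (h : StrictPref pref A B) (hB : pref B B') : StrictPref pref A B' :=
  ⟨htrans _ _ _ h.1 hB, fun h' => h.2 (htrans _ _ _ hB h')⟩

end StrictPref

lemma sum_pushforward_biUnion_strictPref_le {C : Type*} [Fintype C] [DecidableEq C]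
    {pref : Finset C → Finset C → Prop}
    (htrans : ∀ S₁ S₂ S₃, pref S₁ S₂ → pref S₂ S₃ → pref S₁ S₃)
    (hmono : ∀ S S' : Finset C, S ⊆ S' → pref S' S)
    {p : Finset C → ℝ} (hp0 : ∀ S, 0 ≤ p S) (hp1 : ∑ S, p S = 1) (t : ℕ) :
    ∑ Sd, ∑ Sa, pushforward (fun f : Fin t → Finset C => univ.biUnion f) (iidWeight p) Sd *
      p Sa * (if StrictPref pref Sa Sd then 1 else 0) ≤ 1 / (t + 1) :=
  calc _ = ∑ f : Fin t → Finset C, iidWeight p f *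
        ∑ Sa, p Sa * (if StrictPref pref Sa (univ.biUnion f) then 1 else 0) := by
        simp_rw [mul_assoc, ← mul_sum]
        exact sum_pushforward_mul _
    _ ≤ ∑ f : Fin t → Finset C, iidWeight p f *
        ∑ Sa, p Sa * (if ∀ i, StrictPref pref Sa (f i) then 1 else 0) := by
        gcongr with f _ Sa
        · exact iidWeight_nonneg hp0 f
        · exact hp0 Sa
        have hunion (h : StrictPref pref Sa (univ.biUnion f)) (i : Fin t) :
            StrictPref pref Sa (f i) :=
          h.trans_pref htrans (hmono _ _ (subset_biUnion_of_mem f (mem_univ i)))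
        split_ifs <;> simp_all
    _ = ∑ Sa, p Sa * ∑ f : Fin t → Finset C, iidWeight p f *
        (if ∀ i, StrictPref pref Sa (f i) then 1 else 0) := by
        simp_rw [mul_sum, ← mul_assoc, mul_comm (iidWeight p _)]
        exact sum_comm
    _ ≤ 1 / (t + 1) :=
        sum_mul_sum_iidWeight_forall_le hp0 hp1 (fun _ _ h => h.not_strictPref) t

lemma sum_sum_mul_card_filter {α β γ : Type*} [Fintype α] [Fintype β] [Fintype γ]
    (w : α → β → ℝ) (P : γ → α → β → Prop) [∀ v a b, Decidable (P v a b)] :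
    ∑ a, ∑ b, w a b * #{v | P v a b} =
      ∑ v, ∑ a, ∑ b, w a b * if P v a b then 1 else 0 := by
  simp_rw [← sum_boole, mul_sum]
  exact (sum_congr rfl fun _ _ => sum_comm).trans sum_comm

theorem stmt_4_general
    {C N : Type} [Fintype C] [Fintype N]
    (pref : N → Finset C → Finset C → Prop)
    (htrans : ∀ v S₁ S₂ S₃, pref v S₁ S₂ → pref v S₂ S₃ → pref v S₁ S₃)
    (hmono : ∀ v (S S' : Finset C), S ⊆ S' → pref v S' S)
    (hn : 1 ≤ Fintype.card N)
    (s : C → ℝ) (hs : ∀ i, 0 ≤ s i)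
    (K K' : ℝ) (hK' : 0 < K') (hK'K : K' ≤ K)
    (Δa : Finset C → ℝ)
    (hΔa0 : ∀ S, 0 ≤ Δa S) (hΔa1 : (∑ S : Finset C, Δa S) = 1)
    (hΔasupp : ∀ S : Finset C, Δa S ≠ 0 → (∑ i ∈ S, s i) = K') :
    ∃ Δd : Finset C → ℝ,
      (∀ S, 0 ≤ Δd S) ∧ (∑ S : Finset C, Δd S) = 1 ∧
      (∀ S : Finset C, Δd S ≠ 0 → (∑ i ∈ S, s i) ≤ K) ∧
      (∑ Sd : Finset C, ∑ Sa : Finset C,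
          Δd Sd * Δa Sa *
            ((Finset.univ.filter (fun v : N => pref v Sa Sd ∧ ¬ pref v Sd Sa)).card : ℝ))
        < (K' / K) * (Fintype.card N : ℝ) := by
  have hK : 0 < K := hK'.trans_le hK'K
  set t := ⌊K / K'⌋₊
  have ht_le : t * K' ≤ K := (le_div_iff₀ hK').1 (Nat.floor_le (div_pos hK hK').le)
  have ht_lt : K < (t + 1) * K' := (div_lt_iff₀ hK').1 (Nat.lt_floor_add_one _)
  set Δd := pushforward (fun f : Fin t → Finset C => univ.biUnion f) (iidWeight Δa)
  refine ⟨Δd, pushforward_nonneg (iidWeight_nonneg hΔa0), ?_, ?_, ?_⟩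
  · rw [sum_pushforward, sum_iidWeight, hΔa1, one_pow]
  · intro S hS
    obtain ⟨f, rfl, hf⟩ := exists_of_pushforward_ne_zero hS
    calc ∑ i ∈ univ.biUnion f, s i
        ≤ ∑ j, ∑ i ∈ f j, s i := sum_biUnion_le_sum_sum hs _ _
      _ = t * K' := by simp [hΔasupp _ (iidWeight_ne_zero hf _)]
      _ ≤ K := ht_le
  calc _ = ∑ v : N, ∑ Sd, ∑ Sa, Δd Sd * Δa Sa *
        (if StrictPref (pref v) Sa Sd then 1 else 0) := by
        -- `convert` reconciles the `Decidable` instances of the two conditions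
        convert sum_sum_mul_card_filter _ fun v Sd Sa => StrictPref (pref v) Sa Sd
        exact Iff.rfl
    _ ≤ ∑ _v : N, 1 / (t + 1 : ℝ) := sum_le_sum fun v _ =>
        sum_pushforward_biUnion_strictPref_le (htrans v) (hmono v) hΔa0 hΔa1 t
    _ = Fintype.card N / (t + 1) := by simp [div_eq_mul_inv]
    _ < K' / K * Fintype.card N := by
        have hn' : (1 : ℝ) ≤ Fintype.card N := by exact_mod_cast hn
        rw [div_mul_eq_mul_div, div_lt_div_iff₀ (by positivity) hK]
        nlinarith

/-- If `0 < K' ≤ K` and `Δa` is a finitely supported distribution over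
committees all of weight exactly `K'`, then there is a distribution `Δd` over
committees of weight at most `K` with `E_{Sd∼Δd,Sa∼Δa}[V(Sd,Sa)] < (K'/K)·n`.
(`pref v S S'` means voter `v` weakly prefers `S` to `S'`; candidate weights `s i ≥ 0`.) -/
theorem stmt_4
    {C N : Type} [Fintype C] [Fintype N] [DecidableEq C]
    (pref : N → Finset C → Finset C → Prop)
    (htotal : ∀ v S S', pref v S S' ∨ pref v S' S)
    (htrans : ∀ v S₁ S₂ S₃, pref v S₁ S₂ → pref v S₂ S₃ → pref v S₁ S₃)
    (hmono : ∀ v (S S' : Finset C), S ⊆ S' → pref v S' S)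
    (hn : 1 ≤ Fintype.card N)
    (s : C → ℝ) (hs : ∀ i, 0 ≤ s i)
    (K K' : ℝ) (hK' : 0 < K') (hK'K : K' ≤ K)
    (Δa : Finset C → ℝ)
    (hΔa0 : ∀ S, 0 ≤ Δa S) (hΔa1 : (∑ S : Finset C, Δa S) = 1)
    (hΔasupp : ∀ S : Finset C, Δa S ≠ 0 → (∑ i ∈ S, s i) = K') :
    ∃ Δd : Finset C → ℝ,
      (∀ S, 0 ≤ Δd S) ∧ (∑ S : Finset C, Δd S) = 1 ∧
      (∀ S : Finset C, Δd S ≠ 0 → (∑ i ∈ S, s i) ≤ K) ∧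
      (∑ Sd : Finset C, ∑ Sa : Finset C,
          Δd Sd * Δa Sa *
            ((Finset.univ.filter (fun v : N => pref v Sa Sd ∧ ¬ pref v Sd Sa)).card : ℝ))
        < (K' / K) * (Fintype.card N : ℝ) :=
  stmt_4_general pref htrans hmono hn s hs K K' hK' hK'K Δa hΔa0 hΔa1 hΔasupp
end

section
/- Let V' ⊆ N be a subset of voters, K' > 0, β ∈ (0,1), and let Δ be a lottery over committees of weight at most K' that is 2-approximately stable for V'. Then for every nonempty committee S_a, the number of voters v ∈ V' with S_a ∈ G_v(Δ) is strictly less than (2/β)·(w(S_a)/K')·|V'|. -/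
attribute [local instance] Classical.propDecidable

open Finset

/-!
A voter `v` for whom `Sa` is good gives probability at least `β` to committees `S` with
`Sa ≻_v S`, so `β` times the number of such voters is at most the expected number of voters
preferring `Sa` to the drawn committee, which stability bounds by `2 (w(Sa)/K') |V'|`.
-/

lemma le_sum_filter_not_of_sum_filter_le {ι : Type*} [Fintype ι] {f : ι → ℝ}
    (hf : ∑ i, f i = 1) {p : ι → Prop} [DecidablePred p] {β : ℝ}
    (h : ∑ i with p i, f i ≤ 1 - β) : β ≤ ∑ i with ¬ p i, f i := by
  have := sum_filter_add_sum_filter_not univ p f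
  linarith

lemma card_filter_mul_le_sum {N : Type*} (V : Finset N) (p : N → Prop) [DecidablePred p]
    {g : N → ℝ} {β : ℝ} (hg : ∀ v ∈ V, 0 ≤ g v) (hp : ∀ v ∈ V, p v → β ≤ g v) :
    #(V.filter p) * β ≤ ∑ v ∈ V, g v :=
  calc (#(V.filter p) : ℝ) * β = ∑ _v ∈ V.filter p, β := by rw [sum_const, nsmul_eq_mul]
    _ ≤ ∑ v ∈ V.filter p, g v :=
      sum_le_sum fun v hv => hp v (mem_filter.1 hv).1 (mem_filter.1 hv).2
    _ ≤ ∑ v ∈ V, g v := sum_le_sum_of_subset_of_nonneg (filter_subset _ _) fun v hv _ => hg v hv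

lemma sum_mul_card_filter_eq_sum_sum_filter {ι N : Type*} [Fintype ι] (V : Finset N)
    (Δ : ι → ℝ) (r : N → ι → Prop) [∀ v S, Decidable (r v S)] :
    ∑ S, Δ S * #(V.filter (r · S)) = ∑ v ∈ V, ∑ S with r v S, Δ S := by
  simp_rw [natCast_card_filter, mul_sum, mul_ite, mul_one, mul_zero, sum_filter]
  exact sum_comm

theorem stmt_6_general
    {C N : Type} [Fintype C]
    (pref : N → Finset C → Finset C → Prop)
    (htotal : ∀ v S S', pref v S S' ∨ pref v S' S)
    (s : C → ℝ)
    (V' : Finset N) (K' : ℝ)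
    (β : ℝ) (hβ : β ∈ Set.Ioo (0 : ℝ) 1)
    (Δ : Finset C → ℝ)
    (hΔ0 : ∀ S, 0 ≤ Δ S) (hΔ1 : (∑ S : Finset C, Δ S) = 1)
    (hstable : ∀ S' : Finset C, S'.Nonempty →
        (∑ S : Finset C, Δ S *
            ((V'.filter (fun v : N => pref v S' S ∧ ¬ pref v S S')).card : ℝ))
          < 2 * ((∑ i ∈ S', s i) / K') * (V'.card : ℝ)) :
    ∀ Sa : Finset C, Sa.Nonempty →
      ((V'.filter (fun v : N =>
          (∑ T ∈ Finset.univ.filter (fun T : Finset C => pref v T Sa), Δ T) ≤ 1 - β)).card : ℝ)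
        < (2 / β) * ((∑ i ∈ Sa, s i) / K') * (V'.card : ℝ) := by
  intro Sa hSa
  have hstrict : ∀ v S, (pref v Sa S ∧ ¬ pref v S Sa) ↔ ¬ pref v S Sa :=
    fun v S => ⟨And.right, fun h => ⟨(htotal v S Sa).resolve_left h, h⟩⟩
  have hcount := card_filter_mul_le_sum V' (fun v => ∑ T with pref v T Sa, Δ T ≤ 1 - β)
    (g := fun v => ∑ S with pref v Sa S ∧ ¬ pref v S Sa, Δ S)
    (fun v _ => sum_nonneg fun S _ => hΔ0 S)
    (fun v _ hv => by simpa only [hstrict] using le_sum_filter_not_of_sum_filter_le hΔ1 hv)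
  rw [← sum_mul_card_filter_eq_sum_sum_filter] at hcount
  rw [div_mul_eq_mul_div, div_mul_eq_mul_div, lt_div_iff₀ hβ.1]
  exact hcount.trans_lt (hstable Sa hSa)

/-- Lemma, part 1: Let `V' ⊆ N`, `K' > 0`, `β ∈ (0,1)`, and let `Δ` be a
lottery over committees of weight at most `K'` that is `2`-approximately stable for `V'`.
Then for every nonempty committee `Sa`, the number of voters `v ∈ V'` with
`Sa ∈ G_v(Δ)` is strictly less than `(2/β)·(w(Sa)/K')·|V'|`.
(`pref v S S'` means voter `v` weakly prefers `S` to `S'`.) -/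
theorem stmt_6
    {C N : Type} [Fintype C] [Fintype N] [DecidableEq C] [DecidableEq N]
    (pref : N → Finset C → Finset C → Prop)
    (htotal : ∀ v S S', pref v S S' ∨ pref v S' S)
    (htrans : ∀ v S₁ S₂ S₃, pref v S₁ S₂ → pref v S₂ S₃ → pref v S₁ S₃)
    (hmono : ∀ v (S S' : Finset C), S ⊆ S' → pref v S' S)
    (s : C → ℝ) (hs : ∀ i, 0 < s i)
    (V' : Finset N) (K' : ℝ) (hK' : 0 < K')
    (β : ℝ) (hβ : β ∈ Set.Ioo (0 : ℝ) 1)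
    (Δ : Finset C → ℝ)
    (hΔ0 : ∀ S, 0 ≤ Δ S) (hΔ1 : (∑ S : Finset C, Δ S) = 1)
    (hΔsupp : ∀ S : Finset C, Δ S ≠ 0 → (∑ i ∈ S, s i) ≤ K')
    (hstable : ∀ S' : Finset C, S'.Nonempty →
        (∑ S : Finset C, Δ S *
            ((V'.filter (fun v : N => pref v S' S ∧ ¬ pref v S S')).card : ℝ))
          < 2 * ((∑ i ∈ S', s i) / K') * (V'.card : ℝ)) :
    ∀ Sa : Finset C, Sa.Nonempty →
      ((V'.filter (fun v : N =>
          (∑ T ∈ Finset.univ.filter (fun T : Finset C => pref v T Sa), Δ T) ≤ 1 - β)).card : ℝ)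
        < (2 / β) * ((∑ i ∈ Sa, s i) / K') * (V'.card : ℝ) :=
  stmt_6_general pref htotal s V' K' β hβ Δ hΔ0 hΔ1 hstable
end

section
/- Let V' ⊆ N be a subset of voters, β ∈ (0,1), and let Δ be any lottery (finitely supported probability distribution over committees). Then there exists a committee S in the support of Δ such that the number of voters v ∈ V' with S ∉ B_v(Δ) is at least (1−β)·|V'|. -/
/-!
For a single voter, the committees `S` whose mass below `S` is at most `β` all lie weakly below
the best of them, so together they carry mass at most `β`; the remaining committees carry mass
at least `1 - β`. Summing over the voters of `V'` and exchanging the sums, the `Δ`-average of the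
number of voters for whom `S` is not bad is at least `(1 - β)|V'|`, so some committee in the
support of `Δ` reaches the average.
-/

attribute [local instance] Classical.propDecidable

open Finset

section

variable {α : Type*}

/-- The proof picks `a` with the most elements of `s` below it; an element `b` not below `a`
would be above `a` and have strictly more. -/
lemma Finset.exists_forall_rel_of_total_of_trans (r : α → α → Prop)
    (htotal : ∀ a b, r a b ∨ r b a) (htrans : ∀ a b c, r a b → r b c → r a c)
    {s : Finset α} (hs : s.Nonempty) : ∃ a ∈ s, ∀ b ∈ s, r a b := by
  obtain ⟨a, ha, hmax⟩ := s.exists_max_image (fun a => #(s.filter (r a ·))) hs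
  refine ⟨a, ha, fun b hb => ?_⟩
  by_contra hab
  have hba : r b a := (htotal a b).resolve_left hab
  have hsub : s.filter (r a ·) ⊆ s.filter (r b ·) := fun c hc => by
    rw [mem_filter] at hc ⊢
    exact ⟨hc.1, htrans b a c hba hc.2⟩
  have hssub : s.filter (r a ·) ⊂ s.filter (r b ·) :=
    (ssubset_iff_of_subset hsub).2
      ⟨b, mem_filter.2 ⟨hb, (htotal b b).elim id id⟩, fun h => hab (mem_filter.1 h).2⟩
  exact (card_lt_card hssub).not_ge (hmax b hb)

variable [Fintype α]

noncomputable def massBelow (r : α → α → Prop) (w : α → ℝ) (a : α) : ℝ :=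
  ∑ b ∈ univ.filter (r a ·), w b

lemma sum_filter_massBelow_le_le (r : α → α → Prop) (htotal : ∀ a b, r a b ∨ r b a)
    (htrans : ∀ a b c, r a b → r b c → r a c) {w : α → ℝ} (hw : ∀ a, 0 ≤ w a) {β : ℝ}
    (hβ : 0 ≤ β) : ∑ a ∈ univ.filter (fun a => massBelow r w a ≤ β), w a ≤ β := by
  rcases (univ.filter (fun a => massBelow r w a ≤ β)).eq_empty_or_nonempty with hempty | hne
  · simpa [hempty] using hβ
  obtain ⟨m, hm, htop⟩ := exists_forall_rel_of_total_of_trans r htotal htrans hne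
  calc ∑ a ∈ univ.filter (fun a => massBelow r w a ≤ β), w a
      ≤ massBelow r w m :=
        sum_le_sum_of_subset_of_nonneg (fun b hb => mem_filter.2 ⟨mem_univ b, htop b hb⟩)
          (fun b _ _ => hw b)
    _ ≤ β := (mem_filter.1 hm).2

lemma sum_sub_le_sum_filter_not_massBelow_le (r : α → α → Prop)
    (htotal : ∀ a b, r a b ∨ r b a) (htrans : ∀ a b c, r a b → r b c → r a c) {w : α → ℝ}
    (hw : ∀ a, 0 ≤ w a) {β : ℝ} (hβ : 0 ≤ β) :
    ∑ a, w a - β ≤ ∑ a ∈ univ.filter (fun a => ¬ massBelow r w a ≤ β), w a := by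
  have hbad := sum_filter_massBelow_le_le r htotal htrans hw hβ
  rw [← sum_filter_add_sum_filter_not univ (fun a => massBelow r w a ≤ β)]
  linarith

lemma sum_mul_card_filter {ι : Type*} (s : Finset ι) (p : ι → α → Prop)
    [∀ i, DecidablePred (p i)] [∀ a, DecidablePred (p · a)] (w : α → ℝ) :
    ∑ a, w a * #(s.filter (p · a)) = ∑ i ∈ s, ∑ a ∈ univ.filter (p i), w a := by
  simp only [natCast_card_filter, mul_sum, mul_ite, mul_one, mul_zero]
  rw [sum_comm]
  exact sum_congr rfl fun i _ => (sum_filter _ _).symm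

lemma exists_ne_zero_le_of_le_sum_mul {w : α → ℝ} (hw0 : ∀ a, 0 ≤ w a) (hw1 : ∑ a, w a = 1)
    (g : α → ℝ) {c : ℝ} (hc : c ≤ ∑ a, w a * g a) : ∃ a, w a ≠ 0 ∧ c ≤ g a := by
  by_contra! hlt
  obtain ⟨a₀, ha₀⟩ : ∃ a, w a ≠ 0 := by
    by_contra! hzero
    simp [hzero] at hw1
  have hsum : ∑ a, w a * g a < ∑ a, w a * c := by
    refine sum_lt_sum (fun a _ => ?_) ⟨a₀, mem_univ a₀, ?_⟩
    · rcases eq_or_ne (w a) 0 with h | h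
      · simp [h]
      · exact mul_le_mul_of_nonneg_left (hlt a h).le (hw0 a)
    · exact mul_lt_mul_of_pos_left (hlt a₀ ha₀) ((hw0 a₀).lt_of_ne' ha₀)
  rw [← sum_mul, hw1, one_mul] at hsum
  linarith

end

theorem stmt_7_general
    {C N : Type} [Fintype C]
    (pref : N → Finset C → Finset C → Prop)
    (htotal : ∀ v S S', pref v S S' ∨ pref v S' S)
    (htrans : ∀ v S₁ S₂ S₃, pref v S₁ S₂ → pref v S₂ S₃ → pref v S₁ S₃)
    (V' : Finset N)
    (β : ℝ) (hβ : β ∈ Set.Ioo (0 : ℝ) 1)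
    (Δ : Finset C → ℝ)
    (hΔ0 : ∀ S, 0 ≤ Δ S) (hΔ1 : (∑ S : Finset C, Δ S) = 1) :
    ∃ S : Finset C, Δ S ≠ 0 ∧
      (1 - β) * (V'.card : ℝ) ≤
        ((V'.filter (fun v : N =>
            ¬ (∑ T ∈ Finset.univ.filter (fun T : Finset C => pref v S T), Δ T) ≤ β)).card : ℝ) := by
  have hgood : ∀ v, 1 - β ≤
      ∑ S ∈ univ.filter (fun S => ¬ massBelow (pref v) Δ S ≤ β), Δ S := fun v => by
    simpa [hΔ1] using
      sum_sub_le_sum_filter_not_massBelow_le (pref v) (htotal v) (htrans v) hΔ0 hβ.1.le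
  refine exists_ne_zero_le_of_le_sum_mul hΔ0 hΔ1 _ ?_
  calc (1 - β) * (V'.card : ℝ)
      = ∑ _v ∈ V', (1 - β) := by rw [sum_const, nsmul_eq_mul, mul_comm]
    _ ≤ ∑ v ∈ V', ∑ S ∈ univ.filter (fun S => ¬ massBelow (pref v) Δ S ≤ β), Δ S :=
      sum_le_sum fun v _ => hgood v
    _ = _ := (sum_mul_card_filter V' (fun v S => ¬ massBelow (pref v) Δ S ≤ β) Δ).symm

/-- Lemma, part 2: Let `V' ⊆ N`, `β ∈ (0,1)`, and let `Δ` be any lottery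
over committees. Then there exists a committee `S` in the support of `Δ` such that the
number of voters `v ∈ V'` with `S ∉ B_v(Δ)` (i.e. the `Δ`-mass of committees weakly
below `S` for `v` exceeds `β`) is at least `(1−β)·|V'|`.
(`pref v S S'` means voter `v` weakly prefers `S` to `S'`.) -/
theorem stmt_7
    {C N : Type} [Fintype C] [Fintype N] [DecidableEq C] [DecidableEq N]
    (pref : N → Finset C → Finset C → Prop)
    (htotal : ∀ v S S', pref v S S' ∨ pref v S' S)
    (htrans : ∀ v S₁ S₂ S₃, pref v S₁ S₂ → pref v S₂ S₃ → pref v S₁ S₃)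
    (V' : Finset N)
    (β : ℝ) (hβ : β ∈ Set.Ioo (0 : ℝ) 1)
    (Δ : Finset C → ℝ)
    (hΔ0 : ∀ S, 0 ≤ Δ S) (hΔ1 : (∑ S : Finset C, Δ S) = 1) :
    ∃ S : Finset C, Δ S ≠ 0 ∧
      (1 - β) * (V'.card : ℝ) ≤
        ((V'.filter (fun v : N =>
            ¬ (∑ T ∈ Finset.univ.filter (fun T : Finset C => pref v S T), Δ T) ≤ β)).card : ℝ) :=
  stmt_7_general pref htotal htrans V' β hβ Δ hΔ0 hΔ1
end

section
/- In the unweighted Ranking setting, (2−ε)-approximately stable committees of integral size K may not exist for any constant ε > 0: for every ε > 0 there exist positive integers n, m, K and a Ranking instance (a strict total order >_v on the m candidates for each of the n voters) such that for every committee S ⊆ C with |S| ≤ K there exists a nonempty committee S' ⊆ C with V(S,S') ≥ (2−ε)·(|S'|/K)·n. -/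
/-!
Take `C` classes of `M` candidates each, with one voter per candidate slot, and let voter `(c, j)`
rank the candidates lexicographically by the cyclic offset of their class from `c` and of their
position from `j`: its favourite block is its own class, read cyclically from position `j`.
A committee of fewer than `2C` members leaves some class `c` with at most one member `(c, p)`.
The candidate `(c, p - 1)` then sits just before that member in the cyclic order of class `c`, so
all `M - 1` voters `(c, j)` with `j ≠ p` prefer it to the whole committee. With `K = 2C - 1` and
`M = C` this singleton objection is backed by `C - 1` of the `C²` voters, which beats
`(2 - ε) · n / K` as soon as `ε C ≥ 3`.
-/

open Finset Function

theorem Finset.coe_lt_min_of_forall_lt {α : Type*} [LinearOrder α] {a : α} {s : Finset α}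
    (h : ∀ b ∈ s, a < b) : (a : WithTop α) < s.min := by
  rcases s.eq_empty_or_nonempty with rfl | hs
  · simp
  · rw [← Finset.coe_min' hs]
    exact WithTop.coe_lt_coe.mpr (h _ (s.min'_mem hs))

section Stability

variable {V A : Type*} [Fintype V]

/-- The voters preferring `S'` to `S`; its cardinality is the paper's `V(S, S')`. -/
def blockingVoters (r : V → A → ℕ) (S' S : Finset A) : Finset V :=
  univ.filter fun v => (S'.image (r v)).min < (S.image (r v)).min

def NoApproxStable (r : V → A → ℕ) (K : ℕ) (α : ℝ) : Prop :=
  ∀ S : Finset A, S.card ≤ K → ∃ S' : Finset A, S'.Nonempty ∧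
    α * ((S'.card : ℝ) / K) * Fintype.card V ≤ (blockingVoters r S' S).card

theorem NoApproxStable.comp_equiv {V' A' : Type*} [Fintype V'] {r : V → A → ℕ} {K : ℕ}
    {α : ℝ} (h : NoApproxStable r K α) (eV : V' ≃ V) (eA : A' ≃ A) :
    NoApproxStable (fun v a => r (eV v) (eA a)) K α := by
  classical
  intro S hS
  obtain ⟨T', hT', hblock⟩ := h (S.map eA.toEmbedding) (by rwa [card_map])
  refine ⟨T'.map eA.symm.toEmbedding, hT'.map, ?_⟩
  have hvoters : blockingVoters (fun v a => r (eV v) (eA a)) (T'.map eA.symm.toEmbedding) S =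
      (blockingVoters r T' (S.map eA.toEmbedding)).map eV.symm.toEmbedding := by
    ext v
    simp [blockingVoters, map_eq_image, image_image, comp_def, Equiv.symm_apply_eq]
  rwa [hvoters, card_map, card_map, Fintype.card_congr eV]

end Stability

section CyclicProfile

variable {C M : ℕ}

/-- Lexicographic in the cyclic offsets `a - v` of class and of position, since
`finProdFinEquiv (x, y) = y + M * x`. -/
def cyclicRank (v a : Fin C × Fin M) : ℕ :=
  finProdFinEquiv (a - v)

theorem cyclicRank_injective [NeZero C] [NeZero M] (v : Fin C × Fin M) :
    Injective (cyclicRank v) :=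
  Fin.val_injective.comp (finProdFinEquiv.injective.comp sub_left_injective)

theorem cyclicRank_of_fst_eq [NeZero C] {v a : Fin C × Fin M} (h : a.1 = v.1) :
    cyclicRank v a = (a.2 - v.2 : Fin M) := by
  simp [cyclicRank, finProdFinEquiv_apply_val, h]

theorem le_cyclicRank_of_fst_ne [NeZero C] {v a : Fin C × Fin M} (h : a.1 ≠ v.1) :
    M ≤ cyclicRank v a := by
  have hpos : 0 < ((a.1 - v.1 : Fin C) : ℕ) := Fin.pos_iff_ne_zero.mpr (sub_ne_zero.mpr h)
  rw [cyclicRank, finProdFinEquiv_apply_val]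
  exact le_add_left (Nat.le_mul_of_pos_right M hpos)

theorem exists_lone_in_class [NeZero M] {S : Finset (Fin C × Fin M)} (hS : S.card < 2 * C) :
    ∃ s : Fin C × Fin M, ∀ t ∈ S, t.1 = s.1 → t = s := by
  obtain ⟨c, -, hc⟩ := exists_card_fiber_lt_of_card_lt_mul (s := S) (f := Prod.fst)
    (t := (univ : Finset (Fin C))) (by rwa [card_univ, Fintype.card_fin, mul_comm])
  by_cases hmem : ∃ s ∈ S, s.1 = c
  · obtain ⟨s, hs, rfl⟩ := hmem
    exact ⟨s, fun t ht htc => card_le_one.mp (Nat.lt_succ_iff.mp hc) t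
      (mem_filter.mpr ⟨ht, htc⟩) s (mem_filter.mpr ⟨hs, rfl⟩)⟩
  · push Not at hmem
    exact ⟨(c, 0), fun t ht htc => absurd htc (hmem t ht)⟩

theorem cyclicRank_pred_lt [NeZero C] [NeZero M] {s : Fin C × Fin M} {S : Finset (Fin C × Fin M)}
    (hs : ∀ t ∈ S, t.1 = s.1 → t = s) {j : Fin M} (hj : j ≠ s.2) :
    ∀ t ∈ S, cyclicRank (s.1, j) (s.1, s.2 - 1) < cyclicRank (s.1, j) t := by
  have hpred : cyclicRank (s.1, j) (s.1, s.2 - 1) = ((s.2 - j : Fin M) : ℕ) - 1 := by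
    rw [cyclicRank_of_fst_eq (v := (s.1, j)) (a := (s.1, s.2 - 1)) rfl, sub_right_comm,
      Fin.val_sub_one_of_ne_zero (sub_ne_zero.mpr hj.symm)]
  intro t ht
  by_cases htc : t.1 = s.1
  · obtain rfl := hs t ht htc
    rw [hpred, cyclicRank_of_fst_eq (v := (t.1, j)) (a := t) rfl]
    exact Nat.sub_one_lt (Fin.val_ne_of_ne (sub_ne_zero.mpr hj.symm))
  · rw [hpred]
    exact ((Nat.sub_le _ 1).trans_lt (Fin.is_lt _)).trans_le
      (le_cyclicRank_of_fst_ne (v := (s.1, j)) htc)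

theorem le_card_blockingVoters_pred [NeZero C] [NeZero M] {s : Fin C × Fin M}
    {S : Finset (Fin C × Fin M)} (hs : ∀ t ∈ S, t.1 = s.1 → t = s) :
    M - 1 ≤ (blockingVoters cyclicRank {(s.1, s.2 - 1)} S).card := by
  have hsub : ({s.2}ᶜ : Finset (Fin M)).map (Embedding.sectR s.1 (Fin M)) ⊆
      blockingVoters cyclicRank {(s.1, s.2 - 1)} S := by
    intro v hv
    obtain ⟨j, hj, rfl⟩ := mem_map.mp hv
    rw [mem_compl, mem_singleton] at hj
    rw [blockingVoters, mem_filter, image_singleton, min_singleton]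
    refine ⟨mem_univ _, coe_lt_min_of_forall_lt fun b hb => ?_⟩
    obtain ⟨t, ht, rfl⟩ := mem_image.mp hb
    exact cyclicRank_pred_lt hs hj t ht
  calc M - 1 = ({s.2}ᶜ : Finset (Fin M)).card := by
        rw [card_compl, card_singleton, Fintype.card_fin]
    _ ≤ _ := (card_map _).symm.le.trans (card_le_card hsub)

theorem noApproxStable_cyclicRank [NeZero C] [NeZero M] {K : ℕ} {α : ℝ} (hK : K < 2 * C)
    (hα : α / K * (C * M) ≤ M - 1) : NoApproxStable (cyclicRank (C := C) (M := M)) K α := by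
  intro S hS
  obtain ⟨s, hs⟩ := exists_lone_in_class (hS.trans_lt hK)
  refine ⟨{(s.1, s.2 - 1)}, singleton_nonempty _, ?_⟩
  have hM : ((M - 1 : ℕ) : ℝ) = M - 1 := Nat.cast_pred (Nat.pos_of_neZero M)
  calc α * ((({(s.1, s.2 - 1)} : Finset (Fin C × Fin M)).card : ℝ) / K) *
        Fintype.card (Fin C × Fin M) = α / K * (C * M) := by
        rw [card_singleton, Fintype.card_prod, Fintype.card_fin, Fintype.card_fin]
        push_cast
        ring
    _ ≤ ((M - 1 : ℕ) : ℝ) := hM ▸ hα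
    _ ≤ _ := by exact_mod_cast le_card_blockingVoters_pred hs

end CyclicProfile

/-- Lower bound: In the unweighted Ranking setting,
`(2−ε)`-approximately stable committees may not exist, for any constant `ε > 0`.
Each voter's strict total order on candidates is encoded by an injective ranking
function `r v : Fin m → ℕ` (smaller rank = more preferred); the induced strict
preference of `v` for committee `S'` over `S` is `(S'.image (r v)).min < (S.image (r v)).min`
in `WithTop ℕ` (so the empty committee, with `min = ⊤`, is least preferred, and otherwise
committees are compared by their best-ranked member). -/
theorem stmt_11 :
    ∀ ε : ℝ, 0 < ε →
      ∃ (n m K : ℕ), 0 < n ∧ 0 < m ∧ 0 < K ∧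
        ∃ r : Fin n → Fin m → ℕ,
          (∀ v, Function.Injective (r v)) ∧
          ∀ S : Finset (Fin m), S.card ≤ K →
            ∃ S' : Finset (Fin m), S'.Nonempty ∧
              (2 - ε) * ((S'.card : ℝ) / (K : ℝ)) * (n : ℝ) ≤
                ((Finset.univ.filter (fun v : Fin n =>
                    (S'.image (r v)).min < (S.image (r v)).min)).card : ℝ) := by
  intro ε hε
  set k := ⌈3 / ε⌉₊
  have hk : 3 ≤ ε * (k + 1) := by
    have := Nat.le_ceil (3 / ε)
    rw [div_le_iff₀ hε] at this
    linarith
  have hα : (2 - ε) / ((2 * k + 1 : ℕ) : ℝ) * ((k + 1 : ℕ) * (k + 1 : ℕ)) ≤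
      ((k + 1 : ℕ) : ℝ) - 1 := by
    push_cast
    rw [div_mul_eq_mul_div, div_le_iff₀ (by positivity)]
    nlinarith [mul_le_mul_of_nonneg_right hk (by positivity : (0 : ℝ) ≤ k + 1)]
  let e : Fin ((k + 1) * (k + 1)) ≃ Fin (k + 1) × Fin (k + 1) := finProdFinEquiv.symm
  refine ⟨(k + 1) * (k + 1), (k + 1) * (k + 1), 2 * k + 1, by positivity, by positivity, by omega,
    fun v a => cyclicRank (e v) (e a), fun v => (cyclicRank_injective (e v)).comp e.injective, ?_⟩
  simpa only [NoApproxStable, blockingVoters, Fintype.card_fin] using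
    ((noApproxStable_cyclicRank (by omega) hα).comp_equiv e e)
end

section
/- Let t ≥ 1, let α_1,…,α_t ≥ 0 with ∑_{i=1}^t α_i = 1, let β > 0, and set p_i = min(1, α_i/(2β)) for each i. Then ∑_{i=1}^{t} α_i · ∏_{j=1}^{i} (1 − p_j) < 2β. -/
/-!
Put `P n = ∏_{j < n} (1 - q j)` and `c = 2β`. The choice `q i = min 1 (a i / c)` gives
`a i (1 - q i) ≤ c q i`, so each term `a i P (i+1)` is at most `c (P i - P (i+1))` and the sum
telescopes to at most `c (1 - P n)`, which is `< c` when `P n > 0`. Once some factor vanishes the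
partial sums stop growing, so strictness propagates by induction.
-/

open Finset

theorem mul_one_sub_min_one_div_le (a : ℝ) {c : ℝ} (hc : 0 < c) :
    a * (1 - min 1 (a / c)) ≤ c * min 1 (a / c) := by
  rcases min_cases (1 : ℝ) (a / c) with ⟨h, -⟩ | ⟨h, -⟩
  · rw [h]
    linarith
  · rw [h, mul_div_cancel₀ a hc.ne', mul_one_sub, sub_le_self_iff, mul_div_assoc']
    exact div_nonneg (mul_self_nonneg a) hc.le

theorem Fin.prod_Iic_eq_prod_range {M : Type*} [CommMonoid M] {t : ℕ} (f : ℕ → M) (i : Fin t) :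
    ∏ j ∈ Iic i, f j = ∏ j ∈ range (i + 1), f j := by
  rw [Nat.range_succ_eq_Iic, ← Fin.map_valEmbedding_Iic, prod_map]
  rfl

section Depletion

variable {a q : ℕ → ℝ} {c : ℝ}

theorem sum_mul_prod_one_sub_add_le (hq : ∀ i, q i ≤ 1) (hb : ∀ i, a i * (1 - q i) ≤ c * q i)
    (n : ℕ) :
    ∑ i ∈ range n, a i * ∏ j ∈ range (i + 1), (1 - q j) + c * ∏ j ∈ range n, (1 - q j) ≤ c := by
  induction n with
  | zero => simp
  | succ n ih =>
    have hP : 0 ≤ ∏ j ∈ range n, (1 - q j) := prod_nonneg fun j _ => sub_nonneg.2 (hq j)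
    rw [sum_range_succ, prod_range_succ]
    nlinarith [mul_le_mul_of_nonneg_left (hb n) hP]

theorem sum_mul_prod_one_sub_lt (hc : 0 < c) (hq : ∀ i, q i ≤ 1)
    (hb : ∀ i, a i * (1 - q i) ≤ c * q i) (n : ℕ) :
    ∑ i ∈ range n, a i * ∏ j ∈ range (i + 1), (1 - q j) < c := by
  induction n with
  | zero => simpa using hc
  | succ n ih =>
    have hP : 0 ≤ ∏ j ∈ range (n + 1), (1 - q j) := prod_nonneg fun j _ => sub_nonneg.2 (hq j)
    rcases hP.eq_or_lt with hzero | hpos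
    · rwa [sum_range_succ, ← hzero, mul_zero, add_zero]
    · have := sum_mul_prod_one_sub_add_le hq hb (n + 1)
      nlinarith

end Depletion

theorem stmt_12_general
    (t : ℕ)
    (α : Fin t → ℝ)
    (β : ℝ) (hβ : 0 < β)
    (p : Fin t → ℝ) (hp : ∀ i, p i = min 1 (α i / (2 * β))) :
    (∑ i, α i * ∏ j ∈ Finset.Iic i, (1 - p j)) < 2 * β := by
  set a : ℕ → ℝ := fun k => if h : k < t then α ⟨k, h⟩ else 0
  set q : ℕ → ℝ := fun k => if h : k < t then p ⟨k, h⟩ else 0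
  have hq : ∀ k, q k ≤ 1 := fun k => by
    by_cases h : k < t <;> simp [q, h, hp]
  have hb : ∀ k, a k * (1 - q k) ≤ 2 * β * q k := fun k => by
    by_cases h : k < t
    · simpa [a, q, h, hp] using mul_one_sub_min_one_div_le (α ⟨k, h⟩) (by positivity : 0 < 2 * β)
    · simp [a, q, h]
  have hsum : ∑ i, α i * ∏ j ∈ Iic i, (1 - p j)
      = ∑ i ∈ range t, a i * ∏ j ∈ range (i + 1), (1 - q j) := by
    rw [← Fin.sum_univ_eq_sum_range]
    refine sum_congr rfl fun i _ => ?_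
    rw [← Fin.prod_Iic_eq_prod_range (fun j => 1 - q j) i]
    simp [a, q]
  rw [hsum]
  exact sum_mul_prod_one_sub_lt (by positivity) hq hb t

/-- For `t ≥ 1`, nonnegative `α i` summing to `1`, `β > 0`, and
`p i = min 1 (α i / (2β))`, we have `∑ i, α i · ∏_{j ≤ i} (1 − p j) < 2β`
(the product over `j = 1, …, i` includes the factor `1 − p i` itself). -/
theorem stmt_12
    (t : ℕ) (ht : 1 ≤ t)
    (α : Fin t → ℝ) (hα : ∀ i, 0 ≤ α i) (hsum : (∑ i, α i) = 1)
    (β : ℝ) (hβ : 0 < β)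
    (p : Fin t → ℝ) (hp : ∀ i, p i = min 1 (α i / (2 * β))) :
    (∑ i, α i * ∏ j ∈ Finset.Iic i, (1 - p j)) < 2 * β :=
  stmt_12_general t α β hβ p hp
end
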